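/- arXiv:2001.01291 — 2 statements merged into one kernel-verified Lean document; each statement's English description precedes it below -/
import Mathlib

section
/- Monotonicity of the iteration (Lemma 3.1): Let Ω ⊂ ℝⁿ be a bounded, open, convex domain. Let u ∈ C(cl Ω) be convex with u ≤ 0 on ∂Ω and 0 < R(u) < ∞, and let v ∈ C(cl Ω) be convex, vanishing on ∂Ω and not identically zero, with Mv = R(u)(−u)^n L^n on Ω. Then R(v) ‖v‖_{L^{n+1}(Ω)}^n ≤ R(u) ‖u‖_{L^{n+1}(Ω)}^n. -/
/-!
A convex function that is continuous up to the boundary of a bounded convex set lies below its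
boundary values, since every point of the set sits on a chord with both endpoints on the frontier;
hence `v ≤ 0` in `Ω`. The layer-cake formula turns the equation for `Mv` into
`I(v) = R(u) ∫_Ω (−v)(−u)^n`, and Hölder's inequality with exponents `n + 1` and `(n + 1)/n`
bounds this by `R(u) ‖v‖_{n+1} ‖u‖_{n+1}^n`. Dividing by `∫_Ω (−v)^{n+1} = ‖v‖_{n+1}^{n+1}` gives
the claim; when `‖v‖_{n+1} = 0` the left-hand side is `0`.
-/

open MeasureTheory Set Filter Metric
open scoped ENNReal RealInnerProductSpace Topology

noncomputable section

/-- Euclidean space `ℝⁿ`. -/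
abbrev Eucl (n : ℕ) : Type := EuclideanSpace ℝ (Fin n)

/-- Subdifferential of `u` at `x`, relative to `Ω`:
`∂u(x) = {p : u(y) ≥ u(x) + p·(y−x) for all y ∈ Ω}`. -/
def subdiff {n : ℕ} (Ω : Set (Eucl n)) (u : Eucl n → ℝ) (x : Eucl n) : Set (Eucl n) :=
  {p | ∀ y ∈ Ω, u x + (inner ℝ p (y - x) : ℝ) ≤ u y}

/-- Image of a set `E` under the subdifferential map: `∂u(E) = ⋃_{x ∈ E} ∂u(x)`. -/
def subdiffImage {n : ℕ} (Ω : Set (Eucl n)) (u : Eucl n → ℝ) (E : Set (Eucl n)) :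
    Set (Eucl n) :=
  ⋃ x ∈ E, subdiff Ω u x

/-- The Monge–Ampère measure of `u`, as a set function: `Mu(E) = L^n(∂u(E))`. -/
def MAm {n : ℕ} (Ω : Set (Eucl n)) (u : Eucl n → ℝ) (E : Set (Eucl n)) : ℝ≥0∞ :=
  volume (subdiffImage Ω u E)

/-- The Monge–Ampère energy `I(u) = ∫_Ω (−u) dMu`, expressed via the layer-cake formula
for the (nonnegative) integrand `−u`. -/
def MAenergy {n : ℕ} (Ω : Set (Eucl n)) (u : Eucl n → ℝ) : ℝ≥0∞ :=
  ∫⁻ t in Ioi (0 : ℝ), MAm Ω u {x ∈ Ω | t < -u x}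

/-- The integral `∫_Ω f dMu` of a signed integrand `f` against the Monge–Ampère measure of `u`,
expressed via the layer-cake formula. -/
def MAint {n : ℕ} (Ω : Set (Eucl n)) (u : Eucl n → ℝ) (f : Eucl n → ℝ) : ℝ :=
  (∫⁻ t in Ioi (0 : ℝ), MAm Ω u {x ∈ Ω | t < f x}).toReal -
    (∫⁻ t in Ioi (0 : ℝ), MAm Ω u {x ∈ Ω | f x < -t}).toReal

/-- The Rayleigh quotient `R(u) = I(u) / ∫_Ω (−u)^{n+1}`. -/
def Rq {n : ℕ} (Ω : Set (Eucl n)) (u : Eucl n → ℝ) : ℝ≥0∞ :=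
  MAenergy Ω u / ∫⁻ x in Ω, ENNReal.ofReal ((-u x) ^ (n + 1))

/-- The class `K` of continuous functions on `cl Ω` that are convex, not identically zero
in `Ω`, and vanish on `∂Ω`. -/
def memK {n : ℕ} (Ω : Set (Eucl n)) (u : Eucl n → ℝ) : Prop :=
  ContinuousOn u (closure Ω) ∧ ConvexOn ℝ Ω u ∧ (∃ x ∈ Ω, u x ≠ 0) ∧
    ∀ x ∈ frontier Ω, u x = 0

/-- The Monge–Ampère eigenvalue `λ_MA = inf_{u ∈ K} R(u)`. -/
def lamMA {n : ℕ} (Ω : Set (Eucl n)) : ℝ≥0∞ :=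
  ⨅ (u : Eucl n → ℝ) (_ : memK Ω u), Rq Ω u

/-- `u` is a Monge–Ampère eigenfunction: `u ∈ K` and `Mu = λ_MA (−u)^n L^n` on `Ω`. -/
def IsMAEigenfunction {n : ℕ} (Ω : Set (Eucl n)) (u : Eucl n → ℝ) : Prop :=
  memK Ω u ∧ ∀ E ⊆ Ω, MeasurableSet E →
    MAm Ω u E = ∫⁻ x in E, lamMA Ω * ENNReal.ofReal ((-u x) ^ n)

/-- The inverse iteration scheme: `u 0` is admissible initial data, and for each `k`,
`u (k+1)` is (the unique) convex solution, continuous up to the boundary and vanishing there,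
of `M u_{k+1} = R(u_k) (−u_k)^n L^n` on `Ω`. -/
def IterScheme {n : ℕ} (Ω : Set (Eucl n)) (u : ℕ → Eucl n → ℝ) : Prop :=
  ContinuousOn (u 0) (closure Ω) ∧ ConvexOn ℝ Ω (u 0) ∧
    (∀ x ∈ frontier Ω, u 0 x ≤ 0) ∧ Rq Ω (u 0) < ⊤ ∧
    (∀ E ⊆ Ω, MeasurableSet E → volume E ≤ MAm Ω (u 0) E) ∧
    ∀ k : ℕ, ContinuousOn (u (k + 1)) (closure Ω) ∧ ConvexOn ℝ Ω (u (k + 1)) ∧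
      (∀ x ∈ frontier Ω, u (k + 1) x = 0) ∧
      ∀ E ⊆ Ω, MeasurableSet E →
        MAm Ω (u (k + 1)) E = ∫⁻ x in E, Rq Ω (u k) * ENNReal.ofReal ((-u k x) ^ n)

/-- The `L^∞(Ω)` norm (sup norm) of `u` on `Ω`. -/
def supN {n : ℕ} (Ω : Set (Eucl n)) (u : Eucl n → ℝ) : ℝ :=
  ⨆ x ∈ Ω, |u x|

/-- The `L^p(Ω)` norm of `u`. -/
def LpN {n : ℕ} (Ω : Set (Eucl n)) (p : ℝ) (u : Eucl n → ℝ) : ℝ :=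
  (∫ x in Ω, |u x| ^ p) ^ (1 / p)

/-- The determinant of the Hessian of `u` at `x`. -/
def hessDet {n : ℕ} (u : Eucl n → ℝ) (x : Eucl n) : ℝ :=
  (Matrix.of fun i j : Fin n =>
    iteratedFDeriv ℝ 2 u x ![EuclideanSpace.single i (1 : ℝ), EuclideanSpace.single j (1 : ℝ)]).det

section ConvexGeometry

variable {E : Type*}

theorem ConvexOn.closure_of_continuousOn [AddCommGroup E] [Module ℝ E] [TopologicalSpace E]
    [IsTopologicalAddGroup E] [ContinuousSMul ℝ E] {s : Set E} {f : E → ℝ}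
    (hf : ConvexOn ℝ s f) (hfc : ContinuousOn f (closure s)) : ConvexOn ℝ (closure s) f := by
  refine ⟨hf.1.closure, fun x hx y hy a b ha hb hab => ?_⟩
  have hxy : (x, y) ∈ closure (s ×ˢ s) := by rw [closure_prod_eq]; exact ⟨hx, hy⟩
  have hcomb : Continuous fun p : E × E => a • p.1 + b • p.2 := by fun_prop
  refine ContinuousWithinAt.closure_le (f := fun p : E × E => f (a • p.1 + b • p.2))
    (g := fun p => a * f p.1 + b * f p.2) hxy ?_ ?_ fun p hp => hf.2 hp.1 hp.2 ha hb hab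
  · exact ContinuousWithinAt.comp (f := fun p : E × E => a • p.1 + b • p.2)
      (hfc _ (hf.1.closure hx hy ha hb hab)) hcomb.continuousWithinAt
      fun p hp => subset_closure (hf.1 hp.1 hp.2 ha hb hab)
  · have h₁ : ContinuousWithinAt (fun p : E × E => f p.1) (s ×ˢ s) (x, y) :=
      (hfc x hx).comp continuousWithinAt_fst fun p hp => subset_closure hp.1
    have h₂ : ContinuousWithinAt (fun p : E × E => f p.2) (s ×ˢ s) (x, y) :=
      (hfc y hy).comp continuousWithinAt_snd fun p hp => subset_closure hp.2
    exact (h₁.const_smul a).add (h₂.const_smul b)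

variable [NormedAddCommGroup E] [NormedSpace ℝ E]

theorem exists_nonneg_add_smul_mem_frontier {s : Set E} (hs : Bornology.IsBounded s) {x d : E}
    (hx : x ∈ closure s) (hd : d ≠ 0) : ∃ t : ℝ, 0 ≤ t ∧ x + t • d ∈ frontier s := by
  have hline : Continuous fun t : ℝ => x + t • d := by fun_prop
  set T := Ici (0 : ℝ) ∩ (fun t : ℝ => x + t • d) ⁻¹' closure s
  obtain ⟨C, hC⟩ := isBounded_iff_forall_norm_le.1 hs.closure
  have hT_bdd : Bornology.IsBounded T := by
    refine isBounded_iff_forall_norm_le.2 ⟨2 * C / ‖d‖, fun t ht => ?_⟩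
    rw [le_div_iff₀ (norm_pos_iff.2 hd), ← norm_smul]
    calc ‖t • d‖ = ‖(x + t • d) - x‖ := by rw [add_sub_cancel_left]
      _ ≤ ‖x + t • d‖ + ‖x‖ := norm_sub_le _ _
      _ ≤ 2 * C := by linarith [hC _ ht.2, hC x hx]
  have hT : IsCompact T :=
    Metric.isCompact_of_isClosed_isBounded (isClosed_Ici.inter (isClosed_closure.preimage hline))
      hT_bdd
  obtain ⟨B, hBT, hBmax⟩ := hT.exists_isGreatest ⟨0, mem_Ici.2 le_rfl, by simpa using hx⟩
  refine ⟨B, hBT.1, hBT.2, fun hB => ?_⟩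
  -- If the ray were in `interior s` at `B`, it would stay in `closure s` a little beyond `B`.
  have hnear : ∀ᶠ t in 𝓝[>] B, x + t • d ∈ interior s :=
    nhdsWithin_le_nhds ((hline.tendsto B) (isOpen_interior.mem_nhds hB))
  obtain ⟨t, ht, hBt⟩ := (hnear.and self_mem_nhdsWithin).exists
  exact (hBmax ⟨hBT.1.trans hBt.le, interior_subset_closure ht⟩).not_gt hBt

theorem ConvexOn.le_of_forall_mem_frontier_le [Nontrivial E] {s : Set E} {f : E → ℝ} {c : ℝ}
    (hs : Bornology.IsBounded s) (hf : ConvexOn ℝ s f) (hfc : ContinuousOn f (closure s))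
    (hfr : ∀ y ∈ frontier s, f y ≤ c) {x : E} (hx : x ∈ closure s) : f x ≤ c := by
  obtain ⟨d, hd⟩ := exists_ne (0 : E)
  obtain ⟨t, ht, hat⟩ := exists_nonneg_add_smul_mem_frontier hs hx hd
  obtain ⟨t', ht', hbt⟩ := exists_nonneg_add_smul_mem_frontier hs hx (neg_ne_zero.2 hd)
  have hseg : x ∈ segment ℝ (x + t' • -d) (x + t • d) := by
    have hxb : x - (x + t' • -d) = t' • d := by simp
    rw [mem_segment_iff_sameRay, hxb, add_sub_cancel_left]
    exact (SameRay.sameRay_nonneg_smul_left d ht').nonneg_smul_right ht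
  calc f x ≤ max (f (x + t' • -d)) (f (x + t • d)) :=
        (hf.closure_of_continuousOn hfc).le_max_of_mem_segment (frontier_subset_closure hbt)
          (frontier_subset_closure hat) hseg
    _ ≤ c := max_le (hfr _ hbt) (hfr _ hat)

end ConvexGeometry

theorem ENNReal.div_pow_succ_mul_pow_le {I a c : ℝ≥0∞} {n : ℕ} (hn : n ≠ 0) (ha : a ≠ ⊤)
    (h : I ≤ c * a) : I / a ^ (n + 1) * a ^ n ≤ c := by
  rcases eq_or_ne a 0 with rfl | ha₀
  · simp [hn]
  have hpow₀ : a ^ n ≠ 0 := pow_ne_zero n ha₀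
  have hpow : a ^ n ≠ ⊤ := ENNReal.pow_ne_top ha
  calc I / a ^ (n + 1) * a ^ n = a ^ n * I / (a ^ n * a) := by
        rw [pow_succ, mul_comm, mul_div_assoc]
    _ = I / a := ENNReal.mul_div_mul_left _ _ hpow₀ hpow
    _ ≤ c := ENNReal.div_le_of_le_mul h

theorem ENNReal.lintegral_mul_pow_le {α : Type*} [MeasurableSpace α] {μ : Measure α}
    {f g : α → ℝ≥0∞} (hf : AEMeasurable f μ) (hg : AEMeasurable g μ) {n : ℕ} (hn : n ≠ 0)
    {a b : ℝ≥0∞} (ha : ∫⁻ x, f x ^ (n + 1) ∂μ = a ^ (n + 1))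
    (hb : ∫⁻ x, g x ^ (n + 1) ∂μ = b ^ (n + 1)) :
    ∫⁻ x, f x * g x ^ n ∂μ ≤ a * b ^ n := by
  have hn₀ : (0 : ℝ) < n := by exact_mod_cast Nat.pos_of_ne_zero hn
  set p : ℝ := ((n + 1 : ℕ) : ℝ)
  set q : ℝ := p / n
  have hpq : p.HolderConjugate q := by
    rw [Real.holderConjugate_iff]
    refine ⟨by simp [p, hn₀], ?_⟩
    simp only [p, q]; push_cast; field_simp; ring
  have hq : (n : ℝ) * q = p := by simp only [q]; field_simp
  have hgq : ∀ x, (g x ^ n) ^ q = g x ^ (n + 1) := fun x => by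
    rw [← ENNReal.rpow_natCast, ← ENNReal.rpow_mul, hq, ENNReal.rpow_natCast]
  calc ∫⁻ x, f x * g x ^ n ∂μ
      ≤ (∫⁻ x, f x ^ p ∂μ) ^ (1 / p) * (∫⁻ x, (g x ^ n) ^ q ∂μ) ^ (1 / q) :=
        ENNReal.lintegral_mul_le_Lp_mul_Lq μ hpq hf (hg.pow_const n)
    _ = (a ^ (n + 1)) ^ (1 / p) * (b ^ (n + 1)) ^ (1 / q) := by
        simp only [hgq, ENNReal.rpow_natCast, p, ha, hb]
    _ = a * b ^ n := by
        congr 1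
        · rw [one_div, ENNReal.pow_rpow_inv_natCast (Nat.succ_ne_zero n)]
        · rw [← ENNReal.rpow_natCast, ← ENNReal.rpow_mul, ← ENNReal.rpow_natCast]
          congr 1
          simp only [q, p]; push_cast; field_simp

theorem integrableOn_abs_rpow_of_continuousOn_closure {E : Type*} [NormedAddCommGroup E]
    [ProperSpace E] [MeasurableSpace E] [BorelSpace E] {μ : Measure E}
    [IsFiniteMeasureOnCompacts μ] {s : Set E} (hs : Bornology.IsBounded s) {w : E → ℝ}
    (hw : ContinuousOn w (closure s)) {p : ℝ} (hp : 0 ≤ p) :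
    IntegrableOn (fun x => |w x| ^ p) s μ :=
  ((hw.abs.rpow_const fun _ _ => Or.inr hp).integrableOn_compact
    hs.isCompact_closure).mono_set subset_closure

theorem MAenergy_eq_lintegral_of_MAm_eq {n : ℕ} {Ω : Set (Eucl n)} (hΩ : IsOpen Ω)
    {v : Eucl n → ℝ} (hv : ContinuousOn v Ω) (hv₀ : ∀ x ∈ Ω, v x ≤ 0) {ρ : Eucl n → ℝ≥0∞}
    (hρ : AEMeasurable ρ (volume.restrict Ω))
    (hMv : ∀ E ⊆ Ω, MeasurableSet E → MAm Ω v E = ∫⁻ x in E, ρ x) :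
    MAenergy Ω v = ∫⁻ x in Ω, ENNReal.ofReal (-v x) * ρ x := by
  set μ := (volume.restrict Ω).withDensity ρ
  have hμ : μ ≪ volume.restrict Ω := withDensity_absolutelyContinuous _ _
  have hlevel : ∀ t : ℝ, {x ∈ Ω | t < -v x} = Ω ∩ v ⁻¹' Iio (-t) := fun t => by
    ext x; simp [lt_neg]
  have hμ_level : ∀ t : ℝ, μ {x | t < -v x} = MAm Ω v {x ∈ Ω | t < -v x} := fun t => by
    have hmeas : MeasurableSet {x ∈ Ω | t < -v x} := by
      rw [hlevel]; exact (hv.isOpen_inter_preimage hΩ isOpen_Iio).measurableSet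
    rw [withDensity_apply' _ _, Measure.restrict_restrict' hΩ.measurableSet,
      hMv _ (fun x hx => hx.1) hmeas, inter_comm]
    rfl
  have hv_meas : AEMeasurable (fun x => -v x) μ :=
    (hv.aemeasurable hΩ.measurableSet).neg.mono_ac hμ
  have hv_nonneg : 0 ≤ᵐ[μ] fun x => -v x :=
    hμ.ae_le (ae_restrict_of_forall_mem hΩ.measurableSet fun x hx => neg_nonneg.2 (hv₀ x hx))
  calc MAenergy Ω v = ∫⁻ t in Ioi 0, μ {x | t < -v x} := by simp only [MAenergy, hμ_level]
    _ = ∫⁻ x, ENNReal.ofReal (-v x) ∂μ :=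
        (lintegral_eq_lintegral_meas_lt μ hv_nonneg hv_meas).symm
    _ = ∫⁻ x in Ω, ENNReal.ofReal (-v x) * ρ x := by
        rw [lintegral_withDensity_eq_lintegral_mul₀' hρ hv_meas.ennreal_ofReal]
        simp only [Pi.mul_apply, mul_comm]

theorem LpN_nonneg {n : ℕ} (Ω : Set (Eucl n)) (p : ℝ) (w : Eucl n → ℝ) : 0 ≤ LpN Ω p w :=
  Real.rpow_nonneg (integral_nonneg fun _ => Real.rpow_nonneg (abs_nonneg _) _) _

theorem lintegral_ofReal_abs_pow_eq {n : ℕ} {Ω : Set (Eucl n)} {w : Eucl n → ℝ} (k : ℕ)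
    (hw : IntegrableOn (fun x => |w x| ^ ((k : ℝ) + 1)) Ω) :
    ∫⁻ x in Ω, ENNReal.ofReal |w x| ^ (k + 1) =
      ENNReal.ofReal (LpN Ω ((k : ℝ) + 1) w) ^ (k + 1) := by
  have hI : 0 ≤ ∫ x in Ω, |w x| ^ ((k : ℝ) + 1) :=
    integral_nonneg fun _ => Real.rpow_nonneg (abs_nonneg _) _
  have hk : (0 : ℝ) < k + 1 := by positivity
  rw [← ENNReal.ofReal_pow (LpN_nonneg _ _ _), LpN, ← Real.rpow_natCast, ← Real.rpow_mul hI,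
    Nat.cast_succ, one_div_mul_cancel hk.ne', Real.rpow_one, ofReal_integral_eq_lintegral_ofReal hw
      (ae_of_all _ fun _ => Real.rpow_nonneg (abs_nonneg _) _)]
  refine lintegral_congr fun x => ?_
  rw [← Nat.cast_succ, Real.rpow_natCast, ENNReal.ofReal_pow (abs_nonneg _)]

theorem lintegral_ofReal_neg_pow_eq_of_nonpos {n : ℕ} {Ω : Set (Eucl n)} (hΩ : MeasurableSet Ω)
    {w : Eucl n → ℝ} (hw₀ : ∀ x ∈ Ω, w x ≤ 0) (k : ℕ)
    (hw : IntegrableOn (fun x => |w x| ^ ((k : ℝ) + 1)) Ω) :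
    ∫⁻ x in Ω, ENNReal.ofReal ((-w x) ^ (k + 1)) =
      ENNReal.ofReal (LpN Ω ((k : ℝ) + 1) w) ^ (k + 1) := by
  rw [← lintegral_ofReal_abs_pow_eq k hw]
  refine setLIntegral_congr_fun hΩ fun x hx => ?_
  rw [← abs_of_nonpos (hw₀ x hx), ENNReal.ofReal_pow (abs_nonneg _)]

theorem MAenergy_le_of_MAm_eq {n : ℕ} (hn : n ≠ 0) {Ω : Set (Eucl n)} (hΩo : IsOpen Ω)
    (hΩb : Bornology.IsBounded Ω) {u v : Eucl n → ℝ} (hu : ContinuousOn u (closure Ω))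
    (hv : ContinuousOn v (closure Ω)) (hv₀ : ∀ x ∈ Ω, v x ≤ 0) {R : ℝ≥0∞}
    (hMv : ∀ E ⊆ Ω, MeasurableSet E → MAm Ω v E = ∫⁻ x in E, R * ENNReal.ofReal ((-u x) ^ n)) :
    MAenergy Ω v ≤
      R * ENNReal.ofReal (LpN Ω ((n : ℝ) + 1) u) ^ n * ENNReal.ofReal (LpN Ω ((n : ℝ) + 1) v) := by
  have hΩm := hΩo.measurableSet
  have hu_meas := (hu.mono subset_closure).aemeasurable (μ := volume) hΩm
  have hv_meas := (hv.mono subset_closure).aemeasurable (μ := volume) hΩm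
  have hu_pow (x : Eucl n) : (-u x) ^ n ≤ |u x| ^ n :=
    (le_abs_self _).trans_eq (by rw [abs_pow, abs_neg])
  calc MAenergy Ω v = ∫⁻ x in Ω, ENNReal.ofReal (-v x) * (R * ENNReal.ofReal ((-u x) ^ n)) :=
        MAenergy_eq_lintegral_of_MAm_eq hΩo (hv.mono subset_closure) hv₀
          ((hu_meas.neg.pow_const n).ennreal_ofReal.const_mul _) hMv
    _ ≤ ∫⁻ x in Ω, R * (ENNReal.ofReal |v x| * ENNReal.ofReal |u x| ^ n) := by
        refine lintegral_mono fun x => ?_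
        rw [mul_left_comm, ← ENNReal.ofReal_pow (abs_nonneg _)]
        exact mul_le_mul_right (mul_le_mul' (ENNReal.ofReal_le_ofReal (neg_le_abs _))
          (ENNReal.ofReal_le_ofReal (hu_pow x))) _
    _ = R * ∫⁻ x in Ω, ENNReal.ofReal |v x| * ENNReal.ofReal |u x| ^ n :=
        lintegral_const_mul'' _ (hv_meas.abs.ennreal_ofReal.mul
          (hu_meas.abs.ennreal_ofReal.pow_const n))
    _ ≤ R * (ENNReal.ofReal (LpN Ω ((n : ℝ) + 1) v) *
          ENNReal.ofReal (LpN Ω ((n : ℝ) + 1) u) ^ n) := by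
        gcongr
        exact ENNReal.lintegral_mul_pow_le hv_meas.abs.ennreal_ofReal hu_meas.abs.ennreal_ofReal hn
          (lintegral_ofReal_abs_pow_eq n
            (integrableOn_abs_rpow_of_continuousOn_closure hΩb hv (by positivity)))
          (lintegral_ofReal_abs_pow_eq n
            (integrableOn_abs_rpow_of_continuousOn_closure hΩb hu (by positivity)))
    _ = _ := by ring

theorem monotonicity_of_iteration_general {n : ℕ} (hn : 1 ≤ n)
    (Ω : Set (Eucl n)) (hΩo : IsOpen Ω)
    (hΩb : Bornology.IsBounded Ω)
    (u v : Eucl n → ℝ)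
    (hu_cont : ContinuousOn u (closure Ω))
    (hv_cont : ContinuousOn v (closure Ω)) (hv_conv : ConvexOn ℝ Ω v)
    (hv_bdry : ∀ x ∈ frontier Ω, v x = 0)
    (hMv : ∀ E ⊆ Ω, MeasurableSet E →
      MAm Ω v E = ∫⁻ x in E, Rq Ω u * ENNReal.ofReal ((-u x) ^ n)) :
    Rq Ω v * ENNReal.ofReal (LpN Ω ((n : ℝ) + 1) v ^ n) ≤
      Rq Ω u * ENNReal.ofReal (LpN Ω ((n : ℝ) + 1) u ^ n) := by
  have hn₀ : n ≠ 0 := Nat.one_le_iff_ne_zero.1 hn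
  have : Nontrivial (Eucl n) :=
    Module.nontrivial_of_finrank_pos (R := ℝ) (by rwa [finrank_euclideanSpace_fin])
  have hv₀ : ∀ x ∈ Ω, v x ≤ 0 := fun x hx =>
    hv_conv.le_of_forall_mem_frontier_le hΩb hv_cont (fun y hy => (hv_bdry y hy).le)
      (subset_closure hx)
  have hI := MAenergy_le_of_MAm_eq hn₀ hΩo hΩb hu_cont hv_cont hv₀ hMv
  have hD := lintegral_ofReal_neg_pow_eq_of_nonpos hΩo.measurableSet hv₀ n
    (integrableOn_abs_rpow_of_continuousOn_closure hΩb hv_cont (by positivity))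
  rw [Rq, hD, ENNReal.ofReal_pow (LpN_nonneg _ _ _), ENNReal.ofReal_pow (LpN_nonneg _ _ _)]
  exact ENNReal.div_pow_succ_mul_pow_le hn₀ ENNReal.ofReal_ne_top hI

/-- Lemma 3.1, monotonicity: if `Mv = R(u)(−u)^n L^n` on `Ω`, then
`R(v) ‖v‖_{L^{n+1}}^n ≤ R(u) ‖u‖_{L^{n+1}}^n`. -/
theorem monotonicity_of_iteration {n : ℕ} (hn : 1 ≤ n)
    (Ω : Set (Eucl n)) (hΩo : IsOpen Ω) (hΩc : Convex ℝ Ω)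
    (hΩb : Bornology.IsBounded Ω) (hΩne : Ω.Nonempty)
    (u v : Eucl n → ℝ)
    (hu_cont : ContinuousOn u (closure Ω)) (hu_conv : ConvexOn ℝ Ω u)
    (hu_bdry : ∀ x ∈ frontier Ω, u x ≤ 0)
    (hRpos : 0 < Rq Ω u) (hRfin : Rq Ω u < ⊤)
    (hv_cont : ContinuousOn v (closure Ω)) (hv_conv : ConvexOn ℝ Ω v)
    (hv_bdry : ∀ x ∈ frontier Ω, v x = 0) (hv_ne : ∃ x ∈ Ω, v x ≠ 0)
    (hMv : ∀ E ⊆ Ω, MeasurableSet E →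
      MAm Ω v E = ∫⁻ x in E, Rq Ω u * ENNReal.ofReal ((-u x) ^ n)) :
    Rq Ω v * ENNReal.ofReal (LpN Ω ((n : ℝ) + 1) v ^ n) ≤
      Rq Ω u * ENNReal.ofReal (LpN Ω ((n : ℝ) + 1) u ^ n) :=
  monotonicity_of_iteration_general hn Ω hΩo hΩb u v hu_cont hv_cont hv_conv hv_bdry hMv
end
end

section
/- Upper bound for the Rayleigh quotients (Corollary 3.5): Let Ω ⊂ ℝⁿ be a bounded, open, convex domain and let u_0 and the iterates u_k be as in the inverse iteration scheme. Then there exists a constant C > 0 depending only on n, L^n(Ω), λ_MA, and u_0 such that R(u_k) ≤ C for all k ≥ 1. -/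
open MeasureTheory Set Filter Metric
open scoped ENNReal RealInnerProductSpace Topology

noncomputable section

/-!
For `k ≥ 1`, `w = u k` solves `Mw = Q (-v)^n` with `v = u (k-1) ≤ 0` convex and `Q = R(u (k-1))`.
Fix `ball z₀ r ⊆ Ω ⊆ closedBall z₀ R` and let `m = max (-v)`, `M = max (-w)`. By convexity,
`-v ≥ r m / (4R)` on `ball z₀ (r/2)`, whereas every subgradient of `w ≤ 0` at a point of that ball
has norm at most `4M/r`; measuring `∂w(ball z₀ (r/2))` in both ways gives `Q m^n ≤ (32 R M / r³)^n`.
Hence `I(w) ≤ M · Mw(Ω) ≤ M Q m^n |Ω| ≤ (32R/r³)^n M^(n+1) |Ω|`. On the other hand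
`-w ≥ M/2` on the copy of `Ω` scaled by `1/2` about a maximum point of `-w`, so
`∫ (-w)^(n+1) ≥ 2^-(2n+1) M^(n+1) |Ω|`, and `R(w) ≤ (32R/r³)^n 2^(2n+1)` whatever `k` is.
-/

section NormedSpace

variable {E : Type*} [NormedAddCommGroup E] [NormedSpace ℝ E] {Ω : Set E}

theorem ConvexOn.closure_of_continuousOn_s9 {f : E → ℝ} (hf : ConvexOn ℝ Ω f)
    (hc : ContinuousOn f (closure Ω)) : ConvexOn ℝ (closure Ω) f := by
  refine ⟨hf.1.closure, fun x hx y hy a b ha hb hab => ?_⟩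
  have hmaps : MapsTo (fun q : E × E => a • q.1 + b • q.2) (closure Ω ×ˢ closure Ω) (closure Ω) :=
    fun q hq => hf.1.closure hq.1 hq.2 ha hb hab
  have hclosed : IsClosed
      {q ∈ closure Ω ×ˢ closure Ω | f (a • q.1 + b • q.2) ≤ a * f q.1 + b * f q.2} :=
    (isClosed_closure.prod isClosed_closure).isClosed_le
      (hc.comp (Continuous.continuousOn (by fun_prop)) hmaps)
      (((hc.comp continuousOn_fst fun _ hq => hq.1).const_smul a).add
        ((hc.comp continuousOn_snd fun _ hq => hq.2).const_smul b))
  have hsub : closure (Ω ×ˢ Ω) ⊆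
      {q ∈ closure Ω ×ˢ closure Ω | f (a • q.1 + b • q.2) ≤ a * f q.1 + b * f q.2} :=
    closure_minimal (fun q hq => ⟨⟨subset_closure hq.1, subset_closure hq.2⟩,
      hf.2 hq.1 hq.2 ha hb hab⟩) hclosed
  exact (hsub (by rw [closure_prod_eq]; exact ⟨hx, hy⟩ : (x, y) ∈ closure (Ω ×ˢ Ω))).2

theorem exists_nonneg_add_smul_mem_frontier_s9 (hΩ : Bornology.IsBounded Ω) {x e : E}
    (hx : x ∈ interior Ω) (he : e ≠ 0) : ∃ t : ℝ, 0 ≤ t ∧ x + t • e ∈ frontier Ω := by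
  by_contra! hfr
  have hf : Continuous fun t : ℝ => x + t • e := by fun_prop
  have hray : Ici 0 ⊆ (fun t : ℝ => x + t • e) ⁻¹' interior Ω := by
    refine isPreconnected_Ici.subset_of_closure_inter_subset (isOpen_interior.preimage hf)
      ⟨0, mem_Ici.mpr le_rfl, by simpa using hx⟩ fun t ⟨htcl, ht⟩ => ?_
    have hcl : x + t • e ∈ closure Ω :=
      closure_mono interior_subset (hf.closure_preimage_subset _ htcl)
    by_contra hint
    exact hfr t ht ⟨hcl, hint⟩
  obtain ⟨D, hD, hΩD⟩ := hΩ.subset_closedBall_lt 0 x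
  have hfar := hΩD (interior_subset (hray (show 0 ≤ (D + 1) / ‖e‖ by positivity)))
  rw [mem_closedBall, dist_eq_norm, add_sub_cancel_left, norm_smul, Real.norm_eq_abs,
    abs_of_pos (by positivity), div_mul_cancel₀ _ (norm_ne_zero_iff.mpr he)] at hfar
  linarith

theorem ConvexOn.nonpos_of_nonpos_on_frontier [Nontrivial E] (hΩ : Bornology.IsBounded Ω)
    {v : E → ℝ} (hv : ConvexOn ℝ (closure Ω) v) (hfr : ∀ x ∈ frontier Ω, v x ≤ 0) :
    ∀ x ∈ closure Ω, v x ≤ 0 := by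
  intro x hx
  rcases (closure_eq_interior_union_frontier Ω ▸ hx : x ∈ interior Ω ∪ frontier Ω) with hx | hx
  · obtain ⟨e, he⟩ := exists_ne (0 : E)
    obtain ⟨t₁, ht₁, hb₁⟩ := exists_nonneg_add_smul_mem_frontier_s9 hΩ hx he
    obtain ⟨t₂, ht₂, hb₂⟩ := exists_nonneg_add_smul_mem_frontier_s9 hΩ hx (neg_ne_zero.mpr he)
    have hseg : x ∈ segment ℝ (x + t₁ • e) (x + t₂ • -e) := by
      rw [mem_segment_iff_sameRay, sub_add_cancel_left, add_sub_cancel_left, ← smul_neg]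
      exact (SameRay.sameRay_nonneg_smul_left _ ht₁).nonneg_smul_right ht₂
    exact (hv.le_on_segment (frontier_subset_closure hb₁) (frontier_subset_closure hb₂)
      hseg).trans (max_le (hfr _ hb₁) (hfr _ hb₂))
  · exact hfr x hx

theorem ConvexOn.div_mul_neg_le_neg_of_mem_ball {v : E → ℝ} {z₀ x₀ z : E} {r R : ℝ}
    (hrR : r ≤ R) (hball : ball z₀ r ⊆ Ω) (hR : closure Ω ⊆ closedBall z₀ R)
    (hv : ConvexOn ℝ (closure Ω) v) (hfr : ∀ x ∈ frontier Ω, v x ≤ 0)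
    (hx₀ : x₀ ∈ closure Ω) (hvx₀ : v x₀ ≤ 0) (hz : z ∈ ball z₀ (r / 2)) :
    r / (4 * R) * -v x₀ ≤ -v z := by
  have hr : 0 < r := by linarith [dist_nonneg.trans_lt (mem_ball.mp hz)]
  have hballint : ball z₀ r ⊆ interior Ω := interior_maximal hball isOpen_ball
  rcases eq_or_ne z x₀ with rfl | hne
  · have : r / (4 * R) ≤ 1 := by rw [div_le_one (by linarith)]; linarith
    nlinarith
  obtain ⟨t, ht, hb⟩ := exists_nonneg_add_smul_mem_frontier_s9
    (isBounded_closedBall.subset (subset_closure.trans hR))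
    (hballint (ball_subset_ball (by linarith) hz)) (sub_ne_zero.mpr hne)
  set b := z + t • (z - x₀)
  set d := ‖z - x₀‖
  have hd : 0 < d := norm_pos_iff.mpr (sub_ne_zero.mpr hne)
  -- `z` splits the segment `[x₀, b]` with `‖b - z‖ ≥ r / 2` and `‖b - x₀‖ ≤ 2 R`.
  have hfar : r / 2 < t * d := by
    have hbr : r ≤ dist b z₀ := not_lt.mp fun h => hb.2 (hballint (mem_ball.mpr h))
    have hbz : dist b z = t * d := by
      rw [dist_eq_norm, add_sub_cancel_left, norm_smul, Real.norm_of_nonneg ht]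
    linarith [dist_triangle b z z₀, mem_ball.mp hz]
  have hnear : (1 + t) * d ≤ 2 * R := by
    have hbx : dist b x₀ = (1 + t) * d := by
      rw [dist_eq_norm, show b - x₀ = (1 + t) • (z - x₀) by module, norm_smul,
        Real.norm_of_nonneg (by positivity)]
    linarith [dist_triangle_right b x₀ z₀, mem_closedBall.mp (hR (frontier_subset_closure hb)),
      mem_closedBall.mp (hR hx₀)]
  have hcomb : (t / (1 + t)) • x₀ + (1 + t)⁻¹ • b = z := by
    simp only [b]
    match_scalars
    · field_simp; ring
    · field_simp
  have hconv := hv.2 hx₀ (frontier_subset_closure hb) (by positivity) (by positivity)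
    (by field_simp; ring : t / (1 + t) + (1 + t)⁻¹ = 1)
  rw [hcomb, smul_eq_mul, smul_eq_mul] at hconv
  have hweight : r / (4 * R) ≤ t / (1 + t) := by
    rw [div_le_div_iff₀ (by nlinarith) (by positivity)]
    nlinarith
  nlinarith [hfr b hb, inv_nonneg.mpr (by positivity : (0 : ℝ) ≤ 1 + t)]

theorem ConvexOn.ofReal_mul_measure_le_setLIntegral_neg_pow [FiniteDimensional ℝ E]
    [MeasurableSpace E] [BorelSpace E] (μ : Measure E) [μ.IsAddHaarMeasure]
    (hΩo : IsOpen Ω) (hΩc : Convex ℝ Ω) {w : E → ℝ} (hw : ConvexOn ℝ (closure Ω) w)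
    (hw0 : ∀ x ∈ closure Ω, w x ≤ 0) {x₁ : E} (hx₁ : x₁ ∈ closure Ω) (p : ℕ) :
    ENNReal.ofReal ((-w x₁ / 2) ^ p * 2⁻¹ ^ Module.finrank ℝ E) * μ Ω ≤
      ∫⁻ x in Ω, ENNReal.ofReal ((-w x) ^ p) ∂μ := by
  have hM : 0 ≤ -w x₁ / 2 := by linarith [hw0 x₁ hx₁]
  set H := AffineMap.homothety x₁ (2⁻¹ : ℝ) '' Ω
  have hmid : ∀ y, AffineMap.homothety x₁ (2⁻¹ : ℝ) y = (2⁻¹ : ℝ) • x₁ + (2⁻¹ : ℝ) • y := by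
    intro y
    rw [AffineMap.homothety_apply, vsub_eq_sub, vadd_eq_add]
    module
  have hHΩ : H ⊆ Ω := by
    rintro _ ⟨y, hy, rfl⟩
    have := hΩc.combo_closure_interior_mem_interior hx₁ (by rwa [hΩo.interior_eq])
      (by norm_num : (0 : ℝ) ≤ 2⁻¹) (by norm_num : (0 : ℝ) < 2⁻¹) (by norm_num)
    rwa [hmid, ← hΩo.interior_eq]
  have hlow : ∀ y ∈ H, -w x₁ / 2 ≤ -w y := by
    rintro _ ⟨y, hy, rfl⟩
    have := hw.2 hx₁ (subset_closure hy) (by norm_num : (0 : ℝ) ≤ 2⁻¹)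
      (by norm_num : (0 : ℝ) ≤ 2⁻¹) (by norm_num)
    rw [hmid]
    rw [smul_eq_mul, smul_eq_mul] at this
    linarith [hw0 y (subset_closure hy)]
  calc ENNReal.ofReal ((-w x₁ / 2) ^ p * 2⁻¹ ^ Module.finrank ℝ E) * μ Ω
      = ∫⁻ _ in H, ENNReal.ofReal ((-w x₁ / 2) ^ p) ∂μ := by
        rw [setLIntegral_const, Measure.addHaar_image_homothety, ENNReal.ofReal_mul (pow_nonneg hM p),
          abs_of_nonneg (by positivity), mul_assoc]
    _ ≤ ∫⁻ x in H, ENNReal.ofReal ((-w x) ^ p) ∂μ :=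
        setLIntegral_mono' ((AffineMap.homothety_isOpenMap x₁ _ (by norm_num) _ hΩo).measurableSet)
          fun y hy => ENNReal.ofReal_le_ofReal (pow_le_pow_left₀ hM (hlow y hy) p)
    _ ≤ ∫⁻ x in Ω, ENNReal.ofReal ((-w x) ^ p) ∂μ := lintegral_mono_set hHΩ

end NormedSpace

section MongeAmpere

variable {n : ℕ} {Ω : Set (Eucl n)} {w : Eucl n → ℝ}

theorem MAm_mono {A B : Set (Eucl n)} (h : A ⊆ B) : MAm Ω w A ≤ MAm Ω w B :=
  measure_mono (biUnion_subset_biUnion_left h)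

theorem MAm_empty : MAm Ω w ∅ = 0 := by
  simp [MAm, subdiffImage]

theorem mul_norm_le_of_mem_subdiff {x p : Eucl n} {ρ : ℝ} (hρ : 0 ≤ ρ)
    (hball : closedBall x ρ ⊆ Ω) (hw : ∀ y ∈ Ω, w y ≤ 0) (hp : p ∈ subdiff Ω w x) :
    ρ * ‖p‖ ≤ -w x := by
  rcases eq_or_ne p 0 with rfl | hp0
  · simpa using hw x (hball (mem_closedBall_self hρ))
  have hpos : 0 < ‖p‖ := norm_pos_iff.mpr hp0
  have hy : x + (ρ / ‖p‖) • p ∈ Ω := hball <| by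
    rw [mem_closedBall, dist_eq_norm, add_sub_cancel_left, norm_smul, Real.norm_of_nonneg
      (by positivity), div_mul_cancel₀ _ hpos.ne']
  have := hp _ hy
  rw [add_sub_cancel_left, real_inner_smul_right, real_inner_self_eq_norm_sq, sq,
    ← mul_assoc, div_mul_cancel₀ _ hpos.ne'] at this
  linarith [hw _ hy]

theorem subdiffImage_ball_half_subset_closedBall {z₀ : Eucl n} {r M : ℝ} (hr : 0 < r)
    (hball : ball z₀ r ⊆ Ω) (hw0 : ∀ y ∈ Ω, w y ≤ 0) (hwM : ∀ y ∈ Ω, -w y ≤ M) :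
    subdiffImage Ω w (ball z₀ (r / 2)) ⊆ closedBall 0 (4 * M / r) := by
  intro p hp
  simp only [subdiffImage, mem_iUnion] at hp
  obtain ⟨x, hx, hpx⟩ := hp
  have hsub : closedBall x (r / 4) ⊆ Ω := fun y hy => hball <| by
    rw [mem_ball] at hx ⊢
    linarith [dist_triangle y x z₀, mem_closedBall.mp hy]
  have := mul_norm_le_of_mem_subdiff (by positivity) hsub hw0 hpx
  rw [mem_closedBall, dist_zero_right, le_div_iff₀ hr]
  linarith [hwM x (hsub (mem_closedBall_self (by positivity)))]

theorem MAm_ball_half_le {z₀ : Eucl n} {r M : ℝ} (hr : 0 < r)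
    (hball : ball z₀ r ⊆ Ω) (hw0 : ∀ y ∈ Ω, w y ≤ 0) (hwM : ∀ y ∈ Ω, -w y ≤ M) :
    MAm Ω w (ball z₀ (r / 2)) ≤
      ENNReal.ofReal ((8 * M / r ^ 2) ^ n) * volume (ball z₀ (r / 2)) := by
  have hz₀ : z₀ ∈ Ω := hball (mem_ball_self hr)
  have hM : 0 ≤ M := by linarith [hw0 z₀ hz₀, hwM z₀ hz₀]
  calc MAm Ω w (ball z₀ (r / 2)) ≤ volume (closedBall (0 : Eucl n) (4 * M / r)) :=
        measure_mono (subdiffImage_ball_half_subset_closedBall hr hball hw0 hwM)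
    _ = ENNReal.ofReal ((8 * M / r ^ 2) ^ n) * volume (ball z₀ (r / 2)) := by
        rw [Measure.addHaar_closedBall _ _ (by positivity),
          Measure.addHaar_ball_of_pos _ z₀ (half_pos hr), finrank_euclideanSpace_fin, ← mul_assoc, ← ENNReal.ofReal_mul (by positivity), ← mul_pow]
        congr 3
        field_simp
        ring

theorem MAenergy_le_MAm_mul {M : ℝ} (hwM : ∀ x ∈ Ω, -w x ≤ M) :
    MAenergy Ω w ≤ MAm Ω w Ω * ENNReal.ofReal M := by
  have hle : ∀ t, MAm Ω w {x ∈ Ω | t < -w x} ≤ (Iio M).indicator (fun _ => MAm Ω w Ω) t := by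
    intro t
    by_cases ht : t < M
    · rw [indicator_of_mem (mem_Iio.mpr ht)]
      exact MAm_mono (sep_subset _ _)
    · have hempty : {x ∈ Ω | t < -w x} = ∅ :=
        eq_empty_of_forall_notMem fun x hx => ht (hx.2.trans_le (hwM x hx.1))
      rw [indicator_of_notMem (mt mem_Iio.mp ht), hempty, MAm_empty]
  calc MAenergy Ω w ≤ ∫⁻ t in Ioi 0, (Iio M).indicator (fun _ => MAm Ω w Ω) t :=
        lintegral_mono hle
    _ = MAm Ω w Ω * ENNReal.ofReal M := by
        rw [lintegral_indicator_const measurableSet_Iio, Measure.restrict_apply measurableSet_Iio,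
          Iio_inter_Ioi, Real.volume_Ioo, sub_zero]

theorem MAm_le_mul_volume {Q : ℝ≥0∞} {f : Eucl n → ℝ} {m : ℝ} (hΩ : MeasurableSet Ω)
    (hf0 : ∀ x ∈ Ω, 0 ≤ f x) (hfm : ∀ x ∈ Ω, f x ≤ m)
    (heq : MAm Ω w Ω = ∫⁻ x in Ω, Q * ENNReal.ofReal (f x ^ n)) :
    MAm Ω w Ω ≤ Q * ENNReal.ofReal (m ^ n) * volume Ω := by
  rw [heq, ← setLIntegral_const]
  exact setLIntegral_mono' hΩ fun x hx =>
    mul_le_mul_right (ENNReal.ofReal_le_ofReal (pow_le_pow_left₀ (hf0 x hx) (hfm x hx) n)) Q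

theorem mul_ofReal_pow_le_of_MAm_ball_half_eq {z₀ : Eucl n} {r M m κ : ℝ} {Q : ℝ≥0∞}
    {f : Eucl n → ℝ} (hr : 0 < r) (hκ : 0 < κ) (hm : 0 ≤ m) (hball : ball z₀ r ⊆ Ω)
    (hw0 : ∀ y ∈ Ω, w y ≤ 0) (hwM : ∀ y ∈ Ω, -w y ≤ M)
    (hf : ∀ z ∈ ball z₀ (r / 2), κ * m ≤ f z)
    (heq : MAm Ω w (ball z₀ (r / 2)) = ∫⁻ x in ball z₀ (r / 2), Q * ENNReal.ofReal (f x ^ n)) :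
    Q * ENNReal.ofReal (m ^ n) ≤ ENNReal.ofReal ((8 * M / (r ^ 2 * κ)) ^ n) := by
  have hB : Q * ENNReal.ofReal ((κ * m) ^ n) * volume (ball z₀ (r / 2)) ≤
      ENNReal.ofReal ((8 * M / r ^ 2) ^ n) * volume (ball z₀ (r / 2)) :=
    calc Q * ENNReal.ofReal ((κ * m) ^ n) * volume (ball z₀ (r / 2))
        = ∫⁻ _ in ball z₀ (r / 2), Q * ENNReal.ofReal ((κ * m) ^ n) :=
          (setLIntegral_const _ _).symm
      _ ≤ ∫⁻ x in ball z₀ (r / 2), Q * ENNReal.ofReal (f x ^ n) :=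
          setLIntegral_mono' measurableSet_ball fun z hz => mul_le_mul_right
            (ENNReal.ofReal_le_ofReal (pow_le_pow_left₀ (by positivity) (hf z hz) n)) Q
      _ = MAm Ω w (ball z₀ (r / 2)) := heq.symm
      _ ≤ _ := MAm_ball_half_le hr hball hw0 hwM
  rw [ENNReal.mul_le_mul_iff_left (measure_ball_pos volume z₀ (half_pos hr)).ne'
    measure_ball_lt_top.ne, mul_pow, ENNReal.ofReal_mul (by positivity), mul_left_comm,
    mul_comm] at hB
  rw [← div_div, div_pow (8 * M / r ^ 2), ENNReal.ofReal_div_of_pos (by positivity)]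
  exact (ENNReal.le_div_iff_mul_le (Or.inl (ENNReal.ofReal_pos.mpr (by positivity)).ne')
    (Or.inl ENNReal.ofReal_ne_top)).mpr hB

theorem Rq_le_of_MAm_eq (hn : 1 ≤ n) (hΩo : IsOpen Ω) (hΩc : Convex ℝ Ω) {z₀ : Eucl n}
    {r R : ℝ} (hr : 0 < r) (hrR : r ≤ R) (hball : ball z₀ r ⊆ Ω)
    (hR : closure Ω ⊆ closedBall z₀ R) {v : Eucl n → ℝ} {Q : ℝ≥0∞}
    (hvc : ContinuousOn v (closure Ω)) (hv : ConvexOn ℝ Ω v) (hvfr : ∀ x ∈ frontier Ω, v x ≤ 0)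
    (hwc : ContinuousOn w (closure Ω)) (hw : ConvexOn ℝ Ω w) (hwfr : ∀ x ∈ frontier Ω, w x ≤ 0)
    (heq : ∀ E ⊆ Ω, MeasurableSet E → MAm Ω w E = ∫⁻ x in E, Q * ENNReal.ofReal ((-v x) ^ n)) :
    Rq Ω w ≤ ENNReal.ofReal ((32 * R / r ^ 3) ^ n * 2 ^ (2 * n + 1)) := by
  have : Nonempty (Fin n) := ⟨⟨0, hn⟩⟩
  have hΩb : Bornology.IsBounded Ω := isBounded_closedBall.subset (subset_closure.trans hR)
  have hvC := hv.closure_of_continuousOn_s9 hvc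
  have hwC := hw.closure_of_continuousOn_s9 hwc
  have hv0 := hvC.nonpos_of_nonpos_on_frontier hΩb hvfr
  have hw0 := hwC.nonpos_of_nonpos_on_frontier hΩb hwfr
  have hK : IsCompact (closure Ω) :=
    (isCompact_closedBall z₀ R).of_isClosed_subset isClosed_closure hR
  have hne : (closure Ω).Nonempty := ⟨z₀, subset_closure (hball (mem_ball_self hr))⟩
  obtain ⟨x₀, hx₀, hvmax⟩ := hK.exists_isMaxOn hne hvc.neg
  obtain ⟨x₁, hx₁, hwmax⟩ := hK.exists_isMaxOn hne hwc.neg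
  have hm : ∀ x ∈ Ω, -v x ≤ -v x₀ := fun x hx => hvmax (subset_closure hx)
  have hM : ∀ x ∈ Ω, -w x ≤ -w x₁ := fun x hx => hwmax (subset_closure hx)
  have hR0 : 0 < R := hr.trans_le hrR
  have hQ := mul_ofReal_pow_le_of_MAm_ball_half_eq hr (by positivity : 0 < r / (4 * R))
    (neg_nonneg.mpr (hv0 x₀ hx₀)) hball (fun y hy => hw0 y (subset_closure hy)) hM
    (fun z hz => hvC.div_mul_neg_le_neg_of_mem_ball hrR hball hR hvfr hx₀ (hv0 x₀ hx₀) hz)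
    (heq _ ((ball_subset_ball (by linarith)).trans hball) measurableSet_ball)
  have hMAm := MAm_le_mul_volume hΩo.measurableSet
    (fun x hx => neg_nonneg.mpr (hv0 x (subset_closure hx))) hm
    (heq Ω subset_rfl hΩo.measurableSet)
  have hden := hwC.ofReal_mul_measure_le_setLIntegral_neg_pow volume hΩo hΩc hw0 hx₁ (n + 1)
  rw [finrank_euclideanSpace_fin] at hden
  have hM0 : 0 ≤ -w x₁ := neg_nonneg.mpr (hw0 x₁ hx₁)
  generalize -w x₁ = M at hM0 hM hQ hden
  refine ENNReal.div_le_of_le_mul ?_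
  calc MAenergy Ω w ≤ MAm Ω w Ω * ENNReal.ofReal M := MAenergy_le_MAm_mul hM
    _ ≤ ENNReal.ofReal ((8 * M / (r ^ 2 * (r / (4 * R)))) ^ n) * volume Ω * ENNReal.ofReal M := by
        gcongr
        exact hMAm.trans (by gcongr)
    _ = ENNReal.ofReal ((32 * R / r ^ 3) ^ n * 2 ^ (2 * n + 1)) *
          (ENNReal.ofReal ((M / 2) ^ (n + 1) * 2⁻¹ ^ n) * volume Ω) := by
        rw [mul_right_comm, ← ENNReal.ofReal_mul (by positivity), ← mul_assoc,
          ← ENNReal.ofReal_mul (by positivity), inv_pow, div_pow M]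
        congr 2
        field_simp
        ring
    _ ≤ _ := by gcongr

theorem IterScheme.iterate_admissible {u : ℕ → Eucl n → ℝ} (hu : IterScheme Ω u) (k : ℕ) :
    ContinuousOn (u k) (closure Ω) ∧ ConvexOn ℝ Ω (u k) ∧ ∀ x ∈ frontier Ω, u k x ≤ 0 := by
  obtain ⟨h0c, h0v, h0fr, -, -, hsucc⟩ := hu
  cases k with
  | zero => exact ⟨h0c, h0v, h0fr⟩
  | succ j =>
    obtain ⟨hc, hv, hfr, -⟩ := hsucc j
    exact ⟨hc, hv, fun x hx => (hfr x hx).le⟩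

end MongeAmpere

/-- Corollary 3.5: uniform upper bound for the Rayleigh quotients of the
iterates (the bound depends only on `n`, `L^n(Ω)`, `λ_MA` and `u_0`). -/
theorem rayleigh_quotient_upper_bound {n : ℕ} (hn : 1 ≤ n)
    (Ω : Set (Eucl n)) (hΩo : IsOpen Ω) (hΩc : Convex ℝ Ω)
    (hΩb : Bornology.IsBounded Ω) (hΩne : Ω.Nonempty)
    (u : ℕ → Eucl n → ℝ) (hu : IterScheme Ω u) :
    ∃ C : ℝ, 0 < C ∧ ∀ k : ℕ, 1 ≤ k → Rq Ω (u k) ≤ ENNReal.ofReal C := by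
  obtain ⟨z₀, hz₀⟩ := hΩne
  obtain ⟨r, hr, hball⟩ := Metric.isOpen_iff.mp hΩo z₀ hz₀
  obtain ⟨R, hR⟩ := hΩb.subset_closedBall z₀
  have hRcl : closure Ω ⊆ closedBall z₀ (max r R) :=
    closure_minimal (hR.trans (closedBall_subset_closedBall (le_max_right r R))) isClosed_closedBall
  refine ⟨(32 * max r R / r ^ 3) ^ n * 2 ^ (2 * n + 1), by positivity, fun k hk => ?_⟩
  obtain ⟨j, rfl⟩ := Nat.exists_eq_add_of_le' hk
  obtain ⟨hvc, hv, hvfr⟩ := hu.iterate_admissible j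
  obtain ⟨-, -, -, -, -, hsucc⟩ := hu
  obtain ⟨hwc, hw, hwfr, heq⟩ := hsucc j
  exact Rq_le_of_MAm_eq hn hΩo hΩc hr (le_max_left r R) hball hRcl hvc hv hvfr hwc hw
    (fun x hx => (hwfr x hx).le) heq
end
end
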